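/- arXiv:1401.3675 — 8 statements merged into one kernel-verified Lean document; each statement's English description precedes it below -/
import Mathlib

section
/- If an ordinal one-sided matching mechanism is strategyproof, then it is upper invariant: for any agent i, any type profile, and any misreport obtained from the true type by swapping two adjacent objects a_k and a_{k+1} in the preference order, agent i's allocation probability is unchanged for every object strictly preferred to a_k under the true type. -/
open Finset

/-- A (strict) preference type over `m` objects: rank `k` maps to the `k`-th choice. -/
abbrev Pref (m : ℕ) := Fin m ≃ Fin m

/-- `a` is strictly preferred to `b` under type `t` (smaller rank). -/
def Prefers {m : ℕ} (t : Pref m) (a b : Fin m) : Prop := t.symm a < t.symm b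

/-- A vNM utility `u` is consistent with type `t`. -/
def Consistent {m : ℕ} (t : Pref m) (u : Fin m → ℝ) : Prop :=
  ∀ a b : Fin m, Prefers t a b ↔ u b < u a

/-- Swap the objects at ranks `k` and `k'` in the preference order. -/
def swapRanks {m : ℕ} (t : Pref m) (k k' : Fin m) : Pref m := (Equiv.swap k k').trans t

/-- Expected utility of allocation (probability vector) `p` under utility `u`. -/
def EU {m : ℕ} (u p : Fin m → ℝ) : ℝ := ∑ j, u j * p j

/-- The mechanism outputs valid allocation matrices: entries nonnegative, rows sum to one,
column sums respect capacities `q`. -/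
def ValidAlloc {n m : ℕ} (q : Fin m → ℕ) (f : (Fin n → Pref m) → Fin n → Fin m → ℝ) : Prop :=
  ∀ t : Fin n → Pref m,
    (∀ i j, 0 ≤ f t i j) ∧ (∀ i, ∑ j, f t i j = 1) ∧ (∀ j, ∑ i, f t i j ≤ (q j : ℝ))

/-- Strategyproofness: truth-telling maximizes expected utility for every consistent utility. -/
def Strategyproof {n m : ℕ} (f : (Fin n → Pref m) → Fin n → Fin m → ℝ) : Prop :=
  ∀ (i : Fin n) (t : Fin n → Pref m) (t' : Pref m) (u : Fin m → ℝ),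
    Consistent (t i) u → EU u (f (Function.update t i t') i) ≤ EU u (f t i)

/-- Upper invariance: an adjacent swap at ranks `k, k+1` leaves the allocation of every object
strictly preferred to the `k`-th choice unchanged. -/
def UpperInvariant {n m : ℕ} (f : (Fin n → Pref m) → Fin n → Fin m → ℝ) : Prop :=
  ∀ (i : Fin n) (t : Fin n → Pref m) (k : Fin m) (h : k.val + 1 < m) (j : Fin m),
    Prefers (t i) j ((t i) k) →
    f (Function.update t i (swapRanks (t i) k ⟨k.val + 1, h⟩)) i j = f t i j

/-- Lower invariance: an adjacent swap at ranks `k, k+1` leaves the allocation of every object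
ranked strictly below the `(k+1)`-st choice unchanged. -/
def LowerInvariant {n m : ℕ} (f : (Fin n → Pref m) → Fin n → Fin m → ℝ) : Prop :=
  ∀ (i : Fin n) (t : Fin n → Pref m) (k : Fin m) (h : k.val + 1 < m) (j : Fin m),
    Prefers (t i) ((t i) ⟨k.val + 1, h⟩) j →
    f (Function.update t i (swapRanks (t i) k ⟨k.val + 1, h⟩)) i j = f t i j

/-- Swap monotonicity: upon an adjacent swap `a_k ≻ a_{k+1}` to `a_{k+1} ≻ a_k`, either the
agent's allocation is unchanged, or its probability for `a_k` strictly decreases and its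
probability for `a_{k+1}` strictly increases. -/
def SwapMonotonic {n m : ℕ} (f : (Fin n → Pref m) → Fin n → Fin m → ℝ) : Prop :=
  ∀ (i : Fin n) (t : Fin n → Pref m) (k : Fin m) (h : k.val + 1 < m),
    (∀ j, f (Function.update t i (swapRanks (t i) k ⟨k.val + 1, h⟩)) i j = f t i j) ∨
    (f (Function.update t i (swapRanks (t i) k ⟨k.val + 1, h⟩)) i ((t i) k) < f t i ((t i) k) ∧
     f t i ((t i) ⟨k.val + 1, h⟩) <
       f (Function.update t i (swapRanks (t i) k ⟨k.val + 1, h⟩)) i ((t i) ⟨k.val + 1, h⟩))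

/-- Minimum value of a utility function. -/
noncomputable def umin {m : ℕ} (u : Fin m → ℝ) : ℝ := sInf (Set.range u)

/-- Uniformly relatively bounded indifference with bound `r`. -/
def URBI {m : ℕ} (r : ℝ) (u : Fin m → ℝ) : Prop :=
  ∀ a b : Fin m, u b < u a → u b - umin u ≤ r * (u a - umin u)

/-- `r`-partial strategyproofness: truth-telling is optimal for every consistent utility
satisfying `URBI r`. -/
def PartialSP {n m : ℕ} (r : ℝ) (f : (Fin n → Pref m) → Fin n → Fin m → ℝ) : Prop :=
  ∀ (i : Fin n) (t : Fin n → Pref m) (t' : Pref m) (u : Fin m → ℝ),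
    Consistent (t i) u → URBI r u →
    EU u (f (Function.update t i t') i) ≤ EU u (f t i)

/-- Cumulative probability of the weak upper contour set of `a` under type `t`. -/
def cumul {m : ℕ} (t : Pref m) (p : Fin m → ℝ) (a : Fin m) : ℝ :=
  ∑ b ∈ Finset.univ.filter (fun b => t.symm b ≤ t.symm a), p b

/-- `p` strictly first order-stochastically dominates `q` with respect to type `t`. -/
def StochDom {m : ℕ} (t : Pref m) (p q : Fin m → ℝ) : Prop :=
  (∀ a, cumul t q a ≤ cumul t p a) ∧ (∃ a, cumul t q a < cumul t p a)

/-! Strategyproofness tested against the utilities `1{rank ≤ ℓ} - ε · rank`, which are consistent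
with the true type for every `ε > 0`, shows in the limit `ε → 0` that truth-telling weakly
stochastically dominates every misreport. Applied in both directions to a type and its swap at
ranks `k, k + 1`, whose weak upper contour sets of the objects ranked above `k` coincide, this
pins down the cumulative probabilities of those objects, and hence the objects' probabilities. -/

open Filter Topology

theorem consistent_comp_symm {m : ℕ} (t : Pref m) {g : Fin m → ℝ} (hg : StrictAnti g) :
    Consistent t (g ∘ t.symm) := fun _ _ => hg.lt_iff_gt.symm

theorem EU_add {m : ℕ} (u v p : Fin m → ℝ) : EU (u + v) p = EU u p + EU v p := by
  simp only [EU, Pi.add_apply, add_mul, sum_add_distrib]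

theorem EU_smul {m : ℕ} (c : ℝ) (u p : Fin m → ℝ) : EU (c • u) p = c * EU u p := by
  simp only [EU, Pi.smul_apply, smul_eq_mul, mul_sum, mul_assoc]

theorem EU_upperIndicator {m : ℕ} (t : Pref m) (p : Fin m → ℝ) (a : Fin m) :
    EU ((fun s => if s ≤ t.symm a then (1 : ℝ) else 0) ∘ t.symm) p = cumul t p a := by
  simp [EU, cumul, sum_filter]

theorem nonpos_of_forall_pos_le_mul {A B : ℝ} (h : ∀ ε > 0, A ≤ ε * B) : A ≤ 0 := by
  have hlim : Tendsto (fun ε => ε * B) (𝓝[>] 0) (𝓝 0) :=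
    tendsto_nhdsWithin_of_tendsto_nhds
      ((continuous_id.mul continuous_const).tendsto' 0 0 (zero_mul B))
  exact ge_of_tendsto hlim (eventually_nhdsWithin_of_forall h)

theorem cumul_le_of_forall_consistent {m : ℕ} {t : Pref m} {p p' : Fin m → ℝ}
    (h : ∀ u, Consistent t u → EU u p' ≤ EU u p) (a : Fin m) :
    cumul t p' a ≤ cumul t p a := by
  set step : Fin m → ℝ := fun s => if s ≤ t.symm a then 1 else 0
  have hstep : Antitone step := fun s s' hss' => by
    by_cases hs' : s' ≤ t.symm a
    · simp [step, hs', hss'.trans hs']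
    · simp only [step, hs', if_false]; split_ifs <;> norm_num
  have hrank : StrictAnti fun s : Fin m => -(s : ℝ) := fun s s' hss' => by
    simpa using hss'
  set v : Fin m → ℝ := (fun s : Fin m => -(s : ℝ)) ∘ t.symm
  refine sub_nonpos.mp (nonpos_of_forall_pos_le_mul (B := EU v p - EU v p') fun ε hε => ?_)
  have hu := h _ (consistent_comp_symm t (hstep.add_strictAnti (hrank.const_mul hε)))
  have hsplit : ∀ q, EU ((fun s => step s + ε * -(s : ℝ)) ∘ t.symm) q
      = cumul t q a + ε * EU v q := fun q => by
    rw [← EU_upperIndicator, ← EU_smul, ← EU_add]; rfl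
  rw [hsplit, hsplit] at hu
  linarith

theorem Strategyproof.cumul_le {n m : ℕ} {f : (Fin n → Pref m) → Fin n → Fin m → ℝ}
    (hsp : Strategyproof f) (i : Fin n) (t : Fin n → Pref m) (t' : Pref m) (a : Fin m) :
    cumul (t i) (f (Function.update t i t') i) a ≤ cumul (t i) (f t i) a :=
  cumul_le_of_forall_consistent (fun u hu => hsp i t t' u hu) a

theorem swapRanks_symm_apply {m : ℕ} (t : Pref m) (k k' a : Fin m) :
    (swapRanks t k k').symm a = Equiv.swap k k' (t.symm a) := rfl

theorem cumul_swapRanks_of_lt {m : ℕ} (t : Pref m) (p : Fin m → ℝ) {k k' a : Fin m}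
    (hk : t.symm a < k) (hk' : t.symm a < k') :
    cumul (swapRanks t k k') p a = cumul t p a := by
  unfold cumul
  refine sum_congr (filter_congr fun b _ => ?_) fun _ _ => rfl
  rw [swapRanks_symm_apply, swapRanks_symm_apply,
    Equiv.swap_apply_of_ne_of_ne hk.ne hk'.ne, Equiv.swap_apply_def]
  split_ifs <;> grind

theorem cumul_eq_sum_lt_add {m : ℕ} (t : Pref m) (p : Fin m → ℝ) (a : Fin m) :
    cumul t p a = ∑ b ∈ univ.filter (fun b => t.symm b < t.symm a), p b + p a := by
  have hsplit : univ.filter (fun b => t.symm b ≤ t.symm a)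
      = insert a (univ.filter (fun b => t.symm b < t.symm a)) := by
    ext b
    simp [le_iff_lt_or_eq, or_comm]
  rw [cumul, hsplit, sum_insert (by simp), add_comm]

theorem eq_of_cumul_eq {m : ℕ} {t : Pref m} {p p' : Fin m → ℝ} {r : Fin m}
    (h : ∀ b, t.symm b < r → cumul t p' b = cumul t p b) (a : Fin m) (ha : t.symm a < r) :
    p' a = p a := by
  induction a using (measure fun b => (t.symm b : ℕ)).wf.induction with
  | h a ih =>
    have hlt : ∀ b ∈ univ.filter (fun b => t.symm b < t.symm a), p' b = p b := fun b hb =>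
      ih b (mem_filter.mp hb).2 ((mem_filter.mp hb).2.trans ha)
    have hcumul := h a ha
    rw [cumul_eq_sum_lt_add, cumul_eq_sum_lt_add, sum_congr rfl hlt] at hcumul
    linarith

theorem sp_implies_upperInvariant_general {n m : ℕ}
    (f : (Fin n → Pref m) → Fin n → Fin m → ℝ)
    (hsp : Strategyproof f) : UpperInvariant f := by
  intro i t k h j hj
  set t' := swapRanks (t i) k ⟨k.val + 1, h⟩
  have hdown := hsp.cumul_le i t t'
  have hup := hsp.cumul_le i (Function.update t i t') (t i)
  simp only [Function.update_self, Function.update_idem, Function.update_eq_self] at hup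
  refine eq_of_cumul_eq (r := k) (fun b hb => (hdown b).antisymm ?_) j ?_
  · have hk' : k < ⟨k.val + 1, h⟩ := Fin.lt_def.mpr k.val.lt_succ_self
    rw [← cumul_swapRanks_of_lt (t i) _ hb (hb.trans hk'),
      ← cumul_swapRanks_of_lt (t i) _ hb (hb.trans hk')]
    exact hup b
  · simpa [Prefers] using hj

/-- strategyproofness implies upper invariance. -/
theorem sp_implies_upperInvariant {n m : ℕ} (q : Fin m → ℕ) (hq : n ≤ ∑ j, q j)
    (f : (Fin n → Pref m) → Fin n → Fin m → ℝ) (hf : ValidAlloc q f)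
    (hsp : Strategyproof f) : UpperInvariant f :=
  sp_implies_upperInvariant_general f hsp
end

section
/- If an ordinal one-sided matching mechanism is strategyproof, then it is lower invariant: for any agent i, any type profile, and any misreport obtained from the true type by swapping two adjacent objects a_k and a_{k+1}, agent i's allocation probability is unchanged for every object ranked strictly below a_{k+1} under the true type. -/
/-!
Let `p` and `p'` be the agent's allocations under the true type `t` and under the swapped report
`t'`. Truthful reporting under `t` gives `EU v p' ≤ EU v p` for every utility `v` consistent with
`t`, and truthful reporting under `t'` (misreporting `t`) gives the reverse inequality for every `v`
consistent with `t'`. Adding a vanishing strictly decreasing perturbation extends both to weakly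
consistent utilities, i.e. those with `v ∘ t` antitone. The indicator of the objects of `t`-rank at
most `r` is weakly consistent with both `t` and `t'` unless `r = k`, so `p` and `p'` have the same
cumulative probabilities at every rank other than `k`. An object of rank `r ≥ k + 2` gets the
difference of the cumulative probabilities at ranks `r` and `r - 1`, hence the same under both.
-/

open Finset

open Function

section Ranks

variable {m : ℕ}

theorem EU_eq_dotProduct (u p : Fin m → ℝ) : EU u p = u ⬝ᵥ p := rfl

theorem consistent_of_strictAnti {t : Pref m} {u : Fin m → ℝ} (hu : StrictAnti (u ∘ t)) :
    Consistent t u := fun a b => by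
  simpa [Prefers] using (hu.lt_iff_gt (a := t.symm b) (b := t.symm a)).symm

def rankUtility (t : Pref m) : Fin m → ℝ := fun a => -((t.symm a : ℕ) : ℝ)

theorem consistent_add_smul_rankUtility {t : Pref m} {v : Fin m → ℝ} (hv : Antitone (v ∘ t))
    {ε : ℝ} (hε : 0 < ε) : Consistent t (v + ε • rankUtility t) := by
  refine consistent_of_strictAnti (hv.add_strictAnti fun x y hxy => ?_)
  have hxy' : ((x : ℕ) : ℝ) < y := by exact_mod_cast hxy
  simpa [rankUtility] using mul_lt_mul_of_pos_left hxy' hε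

def upperIndicator (t : Pref m) (r : ℕ) : Fin m → ℝ :=
  fun a => if ((t.symm a : ℕ)) ≤ r then 1 else 0

theorem antitone_upperIndicator_comp (t : Pref m) (r : ℕ) :
    Antitone (upperIndicator t r ∘ t) := fun x y hxy => by
  have hxy' : (x : ℕ) ≤ y := hxy
  simp only [upperIndicator, Function.comp_apply, Equiv.symm_apply_apply]
  split_ifs <;> first | omega | norm_num

theorem val_swap_adjacent_le_iff (k : Fin m) (h : k.val + 1 < m) {r : ℕ} (hr : r ≠ k)
    (x : Fin m) : (Equiv.swap k ⟨k.val + 1, h⟩ x : ℕ) ≤ r ↔ (x : ℕ) ≤ r := by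
  rw [Equiv.swap_apply_def]
  split_ifs with hk hk' <;> simp only [Fin.ext_iff] at * <;> omega

theorem upperIndicator_swapRanks (t : Pref m) (k : Fin m) (h : k.val + 1 < m) {r : ℕ}
    (hr : r ≠ k) : upperIndicator (swapRanks t k ⟨k.val + 1, h⟩) r = upperIndicator t r := by
  funext a
  simp only [upperIndicator, swapRanks, Equiv.symm_trans_apply, Equiv.symm_swap,
    val_swap_adjacent_le_iff k h hr]

theorem upperIndicator_sub_upperIndicator_pred (t : Pref m) {j : Fin m}
    (hj : 0 < ((t.symm j : ℕ))) :
    upperIndicator t (t.symm j) - upperIndicator t ((t.symm j : ℕ) - 1) = Pi.single j 1 := by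
  funext a
  rcases eq_or_ne a j with rfl | ha
  · have hpred : ¬ (t.symm a : ℕ) ≤ (t.symm a : ℕ) - 1 := by omega
    simp [upperIndicator, hpred]
  · have hrank : (t.symm a : ℕ) ≠ t.symm j := fun h => ha (t.symm.injective (Fin.ext h))
    simp only [Pi.sub_apply, upperIndicator, Pi.single_apply, if_neg ha]
    split_ifs <;> first | omega | norm_num

theorem eq_EU_upperIndicator_sub_EU_upperIndicator_pred (t : Pref m) (p : Fin m → ℝ)
    {j : Fin m} (hj : 0 < ((t.symm j : ℕ))) :
    p j = EU (upperIndicator t (t.symm j)) p - EU (upperIndicator t ((t.symm j : ℕ) - 1)) p := by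
  rw [EU_eq_dotProduct, EU_eq_dotProduct, ← sub_dotProduct,
    upperIndicator_sub_upperIndicator_pred t hj, single_dotProduct, one_mul]

end Ranks

theorem le_of_forall_pos_add_mul_le {a b c d : ℝ} (h : ∀ ε > 0, a + ε * c ≤ b + ε * d) :
    a ≤ b := by
  have hlim : ∀ y z : ℝ, Filter.Tendsto (fun ε => y + ε * z) (nhdsWithin 0 (Set.Ioi 0)) (nhds y) :=
    fun y z => tendsto_nhdsWithin_of_tendsto_nhds <| by
      have hc : Continuous fun ε : ℝ => y + ε * z := by fun_prop
      simpa using hc.tendsto 0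
  exact le_of_tendsto_of_tendsto (hlim a c) (hlim b d) (eventually_nhdsWithin_of_forall h)

section Strategyproof

variable {n m : ℕ} {f : (Fin n → Pref m) → Fin n → Fin m → ℝ}

theorem Strategyproof.EU_le_of_antitone (hsp : Strategyproof f) (i : Fin n)
    (t : Fin n → Pref m) (t' : Pref m) {v : Fin m → ℝ} (hv : Antitone (v ∘ t i)) :
    EU v (f (update t i t') i) ≤ EU v (f t i) := by
  refine le_of_forall_pos_add_mul_le (c := EU (rankUtility (t i)) (f (update t i t') i))
    (d := EU (rankUtility (t i)) (f t i)) fun ε hε => ?_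
  have := hsp i t t' _ (consistent_add_smul_rankUtility hv hε)
  simpa only [EU_eq_dotProduct, add_dotProduct, smul_dotProduct, smul_eq_mul] using this

theorem Strategyproof.EU_eq_of_antitone (hsp : Strategyproof f) (i : Fin n)
    (t : Fin n → Pref m) (t' : Pref m) {v : Fin m → ℝ} (hv : Antitone (v ∘ t i))
    (hv' : Antitone (v ∘ t')) : EU v (f (update t i t') i) = EU v (f t i) := by
  refine le_antisymm (hsp.EU_le_of_antitone i t t' hv) ?_
  simpa using hsp.EU_le_of_antitone i (update t i t') (t i) (by simpa using hv')

end Strategyproof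

theorem sp_implies_lowerInvariant_general {n m : ℕ}
    (f : (Fin n → Pref m) → Fin n → Fin m → ℝ)
    (hsp : Strategyproof f) : LowerInvariant f := by
  intro i t k h j hj
  set t' := swapRanks (t i) k ⟨k.val + 1, h⟩
  have hcumul : ∀ r : ℕ, r ≠ k →
      EU (upperIndicator (t i) r) (f (update t i t') i) = EU (upperIndicator (t i) r) (f t i) :=
    fun r hr => hsp.EU_eq_of_antitone i t t' (antitone_upperIndicator_comp (t i) r)
      (upperIndicator_swapRanks (t i) k h hr ▸ antitone_upperIndicator_comp t' r)
  have hrank : k.val + 1 < ((t i).symm j : ℕ) := by simpa [Prefers, Fin.lt_def] using hj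
  have hpos : 0 < ((t i).symm j : ℕ) := by omega
  rw [eq_EU_upperIndicator_sub_EU_upperIndicator_pred (t i) (f (update t i t') i) hpos,
    eq_EU_upperIndicator_sub_EU_upperIndicator_pred (t i) (f t i) hpos,
    hcumul _ (by omega), hcumul _ (by omega)]

/-- strategyproofness implies lower invariance. -/
theorem sp_implies_lowerInvariant {n m : ℕ} (q : Fin m → ℕ) (hq : n ≤ ∑ j, q j)
    (f : (Fin n → Pref m) → Fin n → Fin m → ℝ) (hf : ValidAlloc q f)
    (hsp : Strategyproof f) : LowerInvariant f :=
  sp_implies_lowerInvariant_general f hsp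
end

section
/- If a mechanism is swap monotonic, upper invariant, and lower invariant, then for any agent whose true type and misreport differ only by a swap of two adjacent objects a ≻ b (true) versus b ≻ a (misreport), and any utility u consistent with the true type, the expected utility from truthful reporting is at least that from the misreport. -/
open Finset

/-!
An adjacent swap of `a = t k` and `b = t (k+1)` can, by upper and lower invariance, only move
probability between `a` and `b`; since rows sum to one, whatever `a` loses `b` gains, so the
utility changes by `(u a - u b) * (p a - p' a)`. Swap monotonicity says `a` does not gain, and
consistency says `u b < u a`.
-/

theorem EU_sub_EU_of_eqOn_compl_pair {m : ℕ} {u p p' : Fin m → ℝ} {a b : Fin m} (hab : a ≠ b)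
    (hsum : ∑ j, p j = ∑ j, p' j) (hoff : ∀ j, j ≠ a → j ≠ b → p' j = p j) :
    EU u p - EU u p' = (u a - u b) * (p a - p' a) := by
  have hpair : ∀ g : Fin m → ℝ,
      ∑ j, g j * (p j - p' j) = g a * (p a - p' a) + g b * (p b - p' b) := by
    intro g
    rw [← sum_pair (f := fun j => g j * (p j - p' j)) hab]
    refine (sum_subset (subset_univ _) fun j _ hj => ?_).symm
    simp only [mem_insert, mem_singleton, not_or] at hj
    rw [hoff j hj.1 hj.2, sub_self, mul_zero]
  have hmass := hpair 1
  have hutil := hpair u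
  simp only [Pi.one_apply, one_mul, sum_sub_distrib, hsum, sub_self] at hmass
  simp only [mul_sub, sum_sub_distrib] at hutil
  unfold EU
  linear_combination hutil - u b * hmass

theorem Consistent.apply_lt_apply {m : ℕ} {t : Pref m} {u : Fin m → ℝ} (hu : Consistent t u)
    {k k' : Fin m} (hk : k < k') : u (t k') < u (t k) :=
  (hu _ _).mp (by simpa [Prefers] using hk)

section Swap

variable {n m : ℕ} {f : (Fin n → Pref m) → Fin n → Fin m → ℝ}

theorem apply_swapRanks_eq_of_ne (hui : UpperInvariant f) (hli : LowerInvariant f)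
    (i : Fin n) (t : Fin n → Pref m) (k : Fin m) (h : k.val + 1 < m) {j : Fin m}
    (hja : j ≠ t i k) (hjb : j ≠ t i ⟨k.val + 1, h⟩) :
    f (Function.update t i (swapRanks (t i) k ⟨k.val + 1, h⟩)) i j = f t i j := by
  rcases lt_trichotomy ((t i).symm j) k with hlt | heq | hgt
  · exact hui i t k h j (by simpa [Prefers] using hlt)
  · exact absurd (by rw [← heq, Equiv.apply_symm_apply]) hja
  · have hne : (t i).symm j ≠ ⟨k.val + 1, h⟩ := fun he =>
      hjb (by rw [← he, Equiv.apply_symm_apply])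
    refine hli i t k h j ?_
    show (t i).symm (t i ⟨k.val + 1, h⟩) < (t i).symm j
    rw [Equiv.symm_apply_apply]
    exact lt_of_le_of_ne (Fin.le_def.mpr hgt) hne.symm

theorem SwapMonotonic.apply_swapRanks_le (hsm : SwapMonotonic f)
    (i : Fin n) (t : Fin n → Pref m) (k : Fin m) (h : k.val + 1 < m) :
    f (Function.update t i (swapRanks (t i) k ⟨k.val + 1, h⟩)) i (t i k) ≤ f t i (t i k) := by
  rcases hsm i t k h with hsame | ⟨hdrop, -⟩
  · exact (hsame _).le
  · exact hdrop.le

end Swap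

theorem axioms_imply_local_sp_general {n m : ℕ} (q : Fin m → ℕ)
    (f : (Fin n → Pref m) → Fin n → Fin m → ℝ) (hf : ValidAlloc q f)
    (hsm : SwapMonotonic f) (hui : UpperInvariant f) (hli : LowerInvariant f) :
    ∀ (i : Fin n) (t : Fin n → Pref m) (k : Fin m) (h : k.val + 1 < m) (u : Fin m → ℝ),
      Consistent (t i) u →
      EU u (f (Function.update t i (swapRanks (t i) k ⟨k.val + 1, h⟩)) i) ≤ EU u (f t i) := by
  intro i t k h u hu
  have hk : k < ⟨k.val + 1, h⟩ := Fin.lt_def.mpr k.val.lt_succ_self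
  have hsum : ∑ j, f t i j =
      ∑ j, f (Function.update t i (swapRanks (t i) k ⟨k.val + 1, h⟩)) i j := by
    rw [(hf _).2.1 i, (hf _).2.1 i]
  rw [← sub_nonneg, EU_sub_EU_of_eqOn_compl_pair ((t i).injective.ne hk.ne) hsum
    fun j hja hjb => apply_swapRanks_eq_of_ne hui hli i t k h hja hjb]
  exact mul_nonneg (sub_nonneg.mpr (hu.apply_lt_apply hk).le)
    (sub_nonneg.mpr (hsm.apply_swapRanks_le i t k h))

/-- under swap monotonicity, upper and lower invariance, no adjacent swap is
a profitable misreport for any consistent utility. -/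
theorem axioms_imply_local_sp {n m : ℕ} (q : Fin m → ℕ) (hq : n ≤ ∑ j, q j)
    (f : (Fin n → Pref m) → Fin n → Fin m → ℝ) (hf : ValidAlloc q f)
    (hsm : SwapMonotonic f) (hui : UpperInvariant f) (hli : LowerInvariant f) :
    ∀ (i : Fin n) (t : Fin n → Pref m) (k : Fin m) (h : k.val + 1 < m) (u : Fin m → ℝ),
      Consistent (t i) u →
      EU u (f (Function.update t i (swapRanks (t i) k ⟨k.val + 1, h⟩)) i) ≤ EU u (f t i) :=
  axioms_imply_local_sp_general q f hf hsm hui hli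
end

section
/- If a mechanism f is r-partially strategyproof for some r ∈ (0,1], then f is swap monotonic. -/
open Finset

/-! Index the agent's allocation by the ranks of its type. Testing `r`-partial strategyproofness
against utilities that decrease geometrically with ratio `ρ ≤ r` down to rank `l` and are damped
by a factor `ε → 0` below it shows that the truthful allocation weakly dominates every
misreport's in the lexicographic order on rank vectors. For an adjacent swap of ranks `k, k + 1`
this applies in both directions, and the two comparisons only differ in the order of those two
ranks: either the allocations agree, or probability moves strictly from the `k`-th to the
`(k + 1)`-st choice. -/

theorem eq_or_lt_and_lt_of_toLex_le_of_toLex_comp_swap_le {ι α : Type*} [LinearOrder ι]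
    [LinearOrder α] {x y : ι → α} {k κ : ι} (hk : k ⋖ κ) (hxy : toLex x ≤ toLex y)
    (hyx : toLex (y ∘ Equiv.swap k κ) ≤ toLex (x ∘ Equiv.swap k κ)) :
    x = y ∨ (x k < y k ∧ y κ < x κ) := by
  rcases hxy.eq_or_lt with hxy | ⟨l, hl, hlt⟩
  · exact .inl (toLex.injective hxy)
  replace hl : ∀ j < l, x j = y j := hl
  replace hlt : x l < y l := hlt
  set s := Equiv.swap k κ
  have hs_of_lt {j : ι} (hjk : j < k) : s j = j :=
    Equiv.swap_apply_of_ne_of_ne hjk.ne (hjk.trans hk.lt).ne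
  have hyx_at (i : ι) (h : ∀ j < i, y (s j) = x (s j)) : y (s i) ≤ x (s i) :=
    Pi.apply_le_of_toLex (x := y ∘ s) (y := x ∘ s) hyx h
  have hyx_κ (hkl : k ≤ l) : y κ ≤ x κ := by
    simpa [s] using hyx_at k fun j hj ↦ by rw [hs_of_lt hj, hl j (hj.trans_le hkl)]
  rcases lt_trichotomy l k with hlk | rfl | hkl
  · have := hyx_at l fun j hj ↦ by rw [hs_of_lt (hj.trans hlk), hl j hj]
    rw [hs_of_lt hlk] at this
    exact absurd hlt this.not_gt
  · refine .inr ⟨hlt, (hyx_κ le_rfl).lt_of_ne fun hκ ↦ ?_⟩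
    have := hyx_at κ fun j hj ↦ by
      rcases (hk.le_of_lt hj).lt_or_eq with hjl | rfl
      · rw [hs_of_lt hjl, hl j hjl]
      · simp [s, hκ]
    simp only [s, Equiv.swap_apply_right] at this
    exact absurd hlt this.not_gt
  · rcases (hk.ge_of_gt hkl).eq_or_lt with rfl | hκl
    · exact absurd hlt (hyx_κ hkl.le).not_gt
    have hsl : s l = l := Equiv.swap_apply_of_ne_of_ne hkl.ne' hκl.ne'
    have hs_lt (j : ι) (hj : j < l) : s j < l := by
      rcases eq_or_ne j k with rfl | hjk
      · simpa [s] using hκl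
      rcases eq_or_ne j κ with rfl | hjκ
      · simpa [s] using hkl
      · rwa [Equiv.swap_apply_of_ne_of_ne hjk hjκ]
    have := hyx_at l fun j hj ↦ (hl (s j) (hs_lt j hj)).symm
    rw [hsl] at this
    exact absurd hlt this.not_gt

open Filter Topology in
lemma nonneg_of_forall_add_mul_nonneg {X T : ℝ} (h : ∀ ε, 0 < ε → ε < 1 → 0 ≤ X + ε * T) :
    0 ≤ X := by
  have hlim : Tendsto (fun ε ↦ X + ε * T) (𝓝[>] 0) (𝓝 X) := by
    have hcont : Continuous fun ε : ℝ ↦ X + ε * T := by fun_prop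
    simpa using (hcont.tendsto 0).mono_left nhdsWithin_le_nhds
  refine ge_of_tendsto hlim ?_
  filter_upwards [Ioo_mem_nhdsGT one_pos] with ε hε using h ε hε.1 hε.2

noncomputable def truncGeomWeight {m : ℕ} (ρ ε : ℝ) (l j : Fin m) : ℝ :=
  (if j ≤ l then 1 else ε) * ρ ^ (j : ℕ)

section truncGeomWeight

variable {m : ℕ} {ρ ε : ℝ} {l : Fin m}

lemma truncGeomWeight_pos (hρ : 0 < ρ) (hε : 0 < ε) (j : Fin m) :
    0 < truncGeomWeight ρ ε l j := by
  unfold truncGeomWeight; split_ifs <;> positivity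

lemma truncGeomWeight_le_mul (hρ0 : 0 ≤ ρ) (hρ1 : ρ ≤ 1) (hε0 : 0 ≤ ε) (hε1 : ε ≤ 1)
    {j j' : Fin m} (hjj' : j < j') : truncGeomWeight ρ ε l j' ≤ ρ * truncGeomWeight ρ ε l j := by
  have hc : (if j' ≤ l then 1 else ε) ≤ (if j ≤ l then (1 : ℝ) else ε) := by
    split_ifs with h' h <;> first | exact le_rfl | exact hε1 | exact absurd (hjj'.le.trans h') h
  have hp : ρ ^ (j' : ℕ) ≤ ρ * ρ ^ (j : ℕ) := by
    rw [← pow_succ']; exact pow_le_pow_of_le_one hρ0 hρ1 hjj'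
  calc truncGeomWeight ρ ε l j' ≤ (if j ≤ l then (1 : ℝ) else ε) * (ρ * ρ ^ (j : ℕ)) :=
        mul_le_mul hc hp (by positivity) (by split_ifs <;> positivity)
    _ = ρ * truncGeomWeight ρ ε l j := by unfold truncGeomWeight; ring

lemma strictAnti_truncGeomWeight (hρ0 : 0 < ρ) (hρ1 : ρ < 1) (hε0 : 0 < ε) (hε1 : ε ≤ 1) :
    StrictAnti (truncGeomWeight ρ ε l) := fun j _ hjj' ↦
  (truncGeomWeight_le_mul hρ0.le hρ1.le hε0.le hε1 hjj').trans_lt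
    (mul_lt_of_lt_one_left (truncGeomWeight_pos hρ0 hε0 j) hρ1)

lemma exists_sum_truncGeomWeight_mul (x : Fin m → ℝ) (hx : ∀ j < l, x j = 0) :
    ∃ T, ∀ ε, ∑ j, truncGeomWeight ρ ε l j * x j = ρ ^ (l : ℕ) * x l + ε * T := by
  refine ⟨∑ j, if l < j then ρ ^ (j : ℕ) * x j else 0, fun ε ↦ ?_⟩
  have hsplit (j : Fin m) : truncGeomWeight ρ ε l j * x j =
      (if j = l then ρ ^ (l : ℕ) * x l else 0) + ε * (if l < j then ρ ^ (j : ℕ) * x j else 0) := by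
    rcases lt_trichotomy j l with h | rfl | h
    · simp [hx j h, h.ne, h.not_gt]
    · simp [truncGeomWeight]
    · simp [truncGeomWeight, h.ne', h, h.not_ge, mul_assoc]
  simp only [hsplit, Finset.sum_add_distrib, Finset.sum_ite_eq', Finset.mem_univ, if_true,
    Finset.mul_sum]

end truncGeomWeight

section Utility

variable {m : ℕ} {r : ℝ} {v u : Fin m → ℝ}

lemma consistent_comp_symm_s8 (σ : Pref m) (hv : StrictAnti v) : Consistent σ (v ∘ σ.symm) :=
  fun _ _ ↦ hv.lt_iff_gt.symm

lemma urbi_of_le_mul (hr : r ≤ 1) (hu : ∀ a, 0 ≤ u a) (h : ∀ a b, u b < u a → u b ≤ r * u a) :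
    URBI r u := by
  intro a b hab
  have hmin : 0 ≤ umin u := Real.sInf_nonneg (by rintro _ ⟨c, rfl⟩; exact hu c)
  nlinarith [h a b hab, mul_nonneg (sub_nonneg.2 hr) hmin]

lemma urbi_comp_symm (σ : Pref m) (hr : r ≤ 1) (hv0 : ∀ j, 0 ≤ v j) (hv : StrictAnti v)
    (hstep : ∀ j j', j < j' → v j' ≤ r * v j) : URBI r (v ∘ σ.symm) :=
  urbi_of_le_mul hr (fun _ ↦ hv0 _) fun a b hab ↦ hstep _ _ ((consistent_comp_symm_s8 σ hv a b).2 hab)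

lemma EU_comp_symm (σ : Pref m) (v p : Fin m → ℝ) : EU (v ∘ σ.symm) p = ∑ j, v j * p (σ j) := by
  unfold EU
  rw [← Equiv.sum_comp σ]
  simp

end Utility

theorem toLex_comp_le_of_forall_EU_le {m : ℕ} {r : ℝ} (hr0 : 0 < r) (hr1 : r ≤ 1) (σ : Pref m)
    {p p' : Fin m → ℝ} (h : ∀ u, Consistent σ u → URBI r u → EU u p ≤ EU u p') :
    toLex (p ∘ σ) ≤ toLex (p' ∘ σ) := by
  refine not_lt.1 fun ⟨l, hl, hlt⟩ ↦ ?_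
  replace hlt : p' (σ l) < p (σ l) := hlt
  obtain ⟨ρ, hρ0, hρ1, hρr⟩ : ∃ ρ, 0 < ρ ∧ ρ < 1 ∧ ρ ≤ r :=
    ⟨r / 2, by linarith, by linarith, by linarith⟩
  obtain ⟨T, hT⟩ := exists_sum_truncGeomWeight_mul (ρ := ρ) (l := l)
    (fun j ↦ p' (σ j) - p (σ j)) fun j hj ↦ sub_eq_zero.2 (hl j hj)
  -- Letting `ε → 0` isolates the first rank `l` at which `p` and `p'` differ.
  have hlex : 0 ≤ ρ ^ (l : ℕ) * (p' (σ l) - p (σ l)) := by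
    refine nonneg_of_forall_add_mul_nonneg (T := T) fun ε hε0 hε1 ↦ ?_
    have hw0 (j : Fin m) := truncGeomWeight_pos (l := l) hρ0 hε0 j
    have hw := strictAnti_truncGeomWeight (l := l) hρ0 hρ1 hε0 hε1.le
    have hEU := h _ (consistent_comp_symm_s8 σ hw) <| urbi_comp_symm σ hr1 (fun j ↦ (hw0 j).le) hw
      fun j j' hjj' ↦ (truncGeomWeight_le_mul hρ0.le hρ1.le hε0.le hε1.le hjj').trans
        (mul_le_mul_of_nonneg_right hρr (hw0 j).le)
    rw [EU_comp_symm, EU_comp_symm] at hEU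
    rw [← hT ε]
    simpa only [mul_sub, Finset.sum_sub_distrib, sub_nonneg] using hEU
  have := pow_pos hρ0 (l : ℕ)
  nlinarith

theorem psp_implies_swapMonotonic_general {n m : ℕ}
    (f : (Fin n → Pref m) → Fin n → Fin m → ℝ)
    (r : ℝ) (h0 : 0 < r) (h1 : r ≤ 1) (hpsp : PartialSP r f) : SwapMonotonic f := by
  intro i t k hk
  set κ : Fin m := ⟨k + 1, hk⟩
  set t' := swapRanks (t i) k κ
  have hkκ : k ⋖ κ := Fin.covBy_iff.2 (Order.covBy_add_one _)
  have hlie : toLex (f (Function.update t i t') i ∘ t i) ≤ toLex (f t i ∘ t i) :=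
    toLex_comp_le_of_forall_EU_le h0 h1 (t i) fun u hu hur ↦ hpsp i t t' u hu hur
  have htruth : toLex (f t i ∘ t') ≤ toLex (f (Function.update t i t') i ∘ t') :=
    toLex_comp_le_of_forall_EU_le h0 h1 t' fun u hu hur ↦ by
      simpa using hpsp i (Function.update t i t') (t i) u (by simpa using hu) hur
  rcases eq_or_lt_and_lt_of_toLex_le_of_toLex_comp_swap_le hkκ hlie htruth with heq | hlt
  · exact .inl fun j ↦ by simpa using congrFun heq ((t i).symm j)
  · exact .inr hlt

/-- r-partial strategyproofness (for some r ∈ (0,1]) implies swap monotonicity. -/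
theorem psp_implies_swapMonotonic {n m : ℕ} (q : Fin m → ℕ) (hq : n ≤ ∑ j, q j)
    (f : (Fin n → Pref m) → Fin n → Fin m → ℝ) (hf : ValidAlloc q f)
    (r : ℝ) (h0 : 0 < r) (h1 : r ≤ 1) (hpsp : PartialSP r f) : SwapMonotonic f :=
  psp_implies_swapMonotonic_general f r h0 h1 hpsp
end

section
/- r-partial strategyproofness implies weak strategyproofness: if a mechanism is r-partially strategyproof for some r ∈ (0,1], then for no agent, type profile, and misreport is the truthful allocation strictly first order-stochastically dominated (with respect to the true type) by the allocation from the misreport. -/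
open Finset

/-!
Order the objects by the true type, write `d` for the difference of the two allocations listed
in that order, and `S k` for its partial sums. For a utility `v` that strictly decreases along
the order, Abel summation gives `∑ v k d k = ∑ (v k - v (k+1)) S (k+1)`, since the total `S m`
vanishes. Strict dominance says every `S k ≥ 0` and some `S k > 0`, so every utility consistent
with the true type strictly prefers the dominating allocation. Among those utilities there is
always one satisfying `URBI r`, namely `(r/2) ^ rank`, and for it partial strategyproofness
forbids exactly this strict preference.
-/

lemma sum_range_mul_pos_of_partial_sums {v d : ℕ → ℝ} {m : ℕ}
    (hv : ∀ k, k + 1 < m → v (k + 1) < v k)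
    (hS : ∀ k < m, 0 ≤ ∑ j ∈ range (k + 1), d j) (htotal : ∑ j ∈ range m, d j = 0)
    (hpos : ∃ k < m, 0 < ∑ j ∈ range (k + 1), d j) :
    0 < ∑ j ∈ range m, v j * d j := by
  obtain ⟨k, hkm, hk⟩ := hpos
  have hk_last : k + 1 < m := by
    by_contra! h
    rw [show k + 1 = m by omega, htotal] at hk
    exact hk.false
  have abel : ∑ j ∈ range m, v j * d j =
      ∑ j ∈ range (m - 1), (v j - v (j + 1)) * ∑ i ∈ range (j + 1), d i := by
    have := sum_range_by_parts v d m
    simp only [smul_eq_mul] at this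
    rw [this, htotal, mul_zero, zero_sub, ← sum_neg_distrib]
    exact sum_congr rfl fun j _ => by ring
  rw [abel]
  refine sum_pos' (fun j hj => ?_) ⟨k, mem_range.2 (by omega), ?_⟩
  · have hj : j + 1 < m := by rw [mem_range] at hj; omega
    exact mul_nonneg (sub_nonneg.2 (hv j hj).le) (hS j (by omega))
  · exact mul_pos (sub_pos.2 (hv k hk_last)) hk

section byRank

variable {m : ℕ} (t : Pref m)

noncomputable def byRank (p : Fin m → ℝ) (j : ℕ) : ℝ :=
  if h : j < m then p (t ⟨j, h⟩) else 0

@[simp]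
lemma byRank_val (p : Fin m → ℝ) (k : Fin m) : byRank t p k = p (t k) := by
  simp [byRank]

lemma sum_range_byRank_mul (u p : Fin m → ℝ) :
    ∑ j ∈ range m, byRank t u j * byRank t p j = EU u p := by
  rw [← Fin.sum_univ_eq_sum_range (fun j => byRank t u j * byRank t p j)]
  simp only [byRank_val]
  exact t.sum_comp fun a => u a * p a

lemma sum_range_byRank (p : Fin m → ℝ) : ∑ j ∈ range m, byRank t p j = ∑ a, p a := by
  rw [← Fin.sum_univ_eq_sum_range (byRank t p)]
  simp only [byRank_val]
  exact t.sum_comp p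

lemma cumul_eq_sum_range_byRank (p : Fin m → ℝ) (a : Fin m) :
    cumul t p a = ∑ j ∈ range ((t.symm a : ℕ) + 1), byRank t p j := by
  have hrange : range ((t.symm a : ℕ) + 1) = (range m).filter (· ≤ (t.symm a : ℕ)) := by
    ext j
    simp only [mem_range, mem_filter]
    omega
  rw [cumul, sum_filter, ← t.sum_comp, hrange, sum_filter,
    ← Fin.sum_univ_eq_sum_range (fun j => if j ≤ (t.symm a : ℕ) then byRank t p j else 0)]
  simp only [Equiv.symm_apply_apply, byRank_val, Fin.le_def]

variable {t} in
lemma Consistent.byRank_succ_lt {u : Fin m → ℝ} (hu : Consistent t u) {k : ℕ} (hk : k + 1 < m) :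
    byRank t u (k + 1) < byRank t u k := by
  have h := (hu (t ⟨k, by omega⟩) (t ⟨k + 1, hk⟩)).1 (by simp [Prefers, Fin.lt_def])
  rwa [byRank, dif_pos hk, byRank, dif_pos (by omega)]

end byRank

theorem StochDom.eu_lt {m : ℕ} {t : Pref m} {u p q : Fin m → ℝ} (hu : Consistent t u)
    (hsum : ∑ a, p a = ∑ a, q a) (hdom : StochDom t p q) : EU u q < EU u p := by
  have hcumul : ∀ k : Fin m, cumul t p (t k) - cumul t q (t k) =
      ∑ j ∈ range (k + 1), (byRank t p j - byRank t q j) := fun k => by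
    rw [cumul_eq_sum_range_byRank, cumul_eq_sum_range_byRank, Equiv.symm_apply_apply,
      sum_sub_distrib]
  have key := sum_range_mul_pos_of_partial_sums (v := byRank t u)
    (d := fun j => byRank t p j - byRank t q j) (m := m)
    (fun k hk => hu.byRank_succ_lt hk)
    (fun k hk => by rw [← hcumul ⟨k, hk⟩]; exact sub_nonneg.2 (hdom.1 _))
    (by rw [sum_sub_distrib, sum_range_byRank, sum_range_byRank, hsum, sub_self])
    (by
      obtain ⟨a, ha⟩ := hdom.2
      refine ⟨t.symm a, (t.symm a).2, ?_⟩
      rw [← hcumul, Equiv.apply_symm_apply]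
      exact sub_pos.2 ha)
  simpa only [mul_sub, sum_sub_distrib, sum_range_byRank_mul, sub_pos] using key

lemma umin_le {m : ℕ} (u : Fin m → ℝ) (a : Fin m) : umin u ≤ u a :=
  csInf_le (Set.finite_range u).bddBelow ⟨a, rfl⟩

lemma umin_nonneg {m : ℕ} {u : Fin m → ℝ} (hu : ∀ a, 0 ≤ u a) : 0 ≤ umin u :=
  Real.sInf_nonneg (by rintro _ ⟨a, rfl⟩; exact hu a)

lemma URBI_of_le_mul {m : ℕ} {u : Fin m → ℝ} {r s : ℝ} (hsr : s ≤ r) (hr : r ≤ 1)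
    (hmin : 0 ≤ umin u) (h : ∀ a b, u b < u a → u b ≤ s * u a) : URBI r u := by
  intro a b hab
  have hua : 0 ≤ u a := hmin.trans (umin_le u a)
  nlinarith [h a b hab, mul_nonneg (sub_nonneg.2 hsr) hua, mul_nonneg (sub_nonneg.2 hr) hmin]

lemma exists_consistent_URBI {m : ℕ} (t : Pref m) {r : ℝ} (h0 : 0 < r) (h1 : r ≤ 1) :
    ∃ u, Consistent t u ∧ URBI r u := by
  set s := r / 2 with hs
  have hs0 : 0 < s := by positivity
  have hs1 : s < 1 := by linarith
  have hcons : Consistent t fun a => s ^ (t.symm a : ℕ) := fun a b =>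
    (Fin.lt_def.trans (pow_lt_pow_iff_right_of_lt_one₀ hs0 hs1).symm)
  refine ⟨_, hcons, URBI_of_le_mul (s := s) (by linarith) h1
    (umin_nonneg fun a => by positivity) fun a b hab => ?_⟩
  have hrank : (t.symm a : ℕ) + 1 ≤ t.symm b := Fin.lt_def.1 ((hcons a b).2 hab)
  calc s ^ (t.symm b : ℕ) ≤ s ^ ((t.symm a : ℕ) + 1) := pow_le_pow_of_le_one hs0.le hs1.le hrank
    _ = s * s ^ (t.symm a : ℕ) := pow_succ' _ _

theorem psp_implies_weak_sp_general {n m : ℕ} (q : Fin m → ℕ)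
    (f : (Fin n → Pref m) → Fin n → Fin m → ℝ) (hf : ValidAlloc q f)
    (r : ℝ) (h0 : 0 < r) (h1 : r ≤ 1) (hpsp : PartialSP r f) :
    ∀ (i : Fin n) (t : Fin n → Pref m) (t' : Pref m),
      ¬ StochDom (t i) (f (Function.update t i t') i) (f t i) := by
  intro i t t' hdom
  obtain ⟨u, hu, hurbi⟩ := exists_consistent_URBI (t i) h0 h1
  have hsum : ∑ a, f (Function.update t i t') i a = ∑ a, f t i a := by
    rw [(hf _).2.1, (hf _).2.1]
  exact (hdom.eu_lt hu hsum).not_ge (hpsp i t t' u hu hurbi)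

/-- r-partial strategyproofness implies weak strategyproofness: no misreport
yields a strictly first order-stochastically dominant allocation. -/
theorem psp_implies_weak_sp {n m : ℕ} (q : Fin m → ℕ) (hq : n ≤ ∑ j, q j)
    (f : (Fin n → Pref m) → Fin n → Fin m → ℝ) (hf : ValidAlloc q f)
    (r : ℝ) (h0 : 0 < r) (h1 : r ≤ 1) (hpsp : PartialSP r f) :
    ∀ (i : Fin n) (t : Fin n → Pref m) (t' : Pref m),
      ¬ StochDom (t i) (f (Function.update t i t') i) (f t i) :=
  psp_implies_weak_sp_general q f hf r h0 h1 hpsp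
end

section
/- Fix an agent i, a type t_i with preference order a_1 ≻ … ≻ a_m, a misreport t_i', and define δ_j = f_i(t_i)(j) − f_i(t_i')(j). Define polynomials x_1(s) = δ_{a_1} and x_k(s) = s·x_{k−1}(s) + δ_{a_k} for k ≥ 2. If x_k(1/r) ≥ 0 for all k ∈ {1,…,m−1}, then for every utility u consistent with t_i satisfying URBI(r) and min u = u(a_m) = 0, we have Σ_j δ_j·u(j) ≥ 0. -/
open Finset

/-- Horner polynomial x_k(s) = Σ_{j ≤ k} δ_{a_j} s^{k−j}, where a_j is the j-th choice
under type t (0-indexed); this is the closed form of the recursion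
x_0(s) = δ_{a_0}, x_k(s) = s·x_{k−1}(s) + δ_{a_k}. -/
def hornerX {m : ℕ} (t : Pref m) (δ : Fin m → ℝ) (s : ℝ) (k : Fin m) : ℝ :=
  ∑ j ∈ Finset.univ.filter (fun j => j ≤ k), δ ((t) j) * s ^ (k.val - j.val)

/-! Write `d k`, `v k` for `δ` and `u` at the `k`-th choice and `x k` for the Horner sums, so
that `x (k + 1) = s * x k + d (k + 1)`. With `s = 1 / r`, URBI and `min u = 0` give
`s * v (k + 1) ≤ v k`, hence, as long as `x k ≥ 0`,
`x (k + 1) * v (k + 1) ≤ x k * v k + d (k + 1) * v (k + 1)`.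
Inductively `∑ d k * v k ≥ x m * v m = 0`, since the last choice has utility `0`. -/

-- Ranks are read off ℕ-indexed sequences through the cast `ℕ → Fin m`, which reduces mod `m`.
open Fin.NatCast

section Horner

variable {R : Type*} [CommRing R]

def hornerSum (d : ℕ → R) (s : R) (k : ℕ) : R :=
  ∑ j ∈ range (k + 1), d j * s ^ (k - j)

theorem hornerSum_succ (d : ℕ → R) (s : R) (k : ℕ) :
    hornerSum d s (k + 1) = s * hornerSum d s k + d (k + 1) := by
  rw [hornerSum, sum_range_succ, hornerSum, mul_sum, Nat.sub_self, pow_zero, mul_one]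
  congr 1
  refine sum_congr rfl fun j hj => ?_
  rw [Nat.sub_add_comm (mem_range_succ_iff.mp hj), pow_succ]
  ring

theorem hornerSum_mul_le_sum_mul [PartialOrder R] [IsOrderedRing R] {d v : ℕ → R} {s : R}
    {M : ℕ} (hd : ∀ k < M, 0 ≤ hornerSum d s k) (hv : ∀ k < M, s * v (k + 1) ≤ v k) :
    hornerSum d s M * v M ≤ ∑ k ∈ range (M + 1), d k * v k := by
  induction M with
  | zero => simp [hornerSum]
  | succ M ih =>
    calc hornerSum d s (M + 1) * v (M + 1)
        = hornerSum d s M * (s * v (M + 1)) + d (M + 1) * v (M + 1) := by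
          rw [hornerSum_succ]; ring
      _ ≤ hornerSum d s M * v M + d (M + 1) * v (M + 1) := by
          gcongr
          exacts [hd M M.lt_succ_self, hv M M.lt_succ_self]
      _ ≤ ∑ k ∈ range (M + 1 + 1), d k * v k := by
          rw [sum_range_succ _ (M + 1)]
          gcongr
          exact ih (fun k hk => hd k (hk.trans M.lt_succ_self))
            (fun k hk => hv k (hk.trans M.lt_succ_self))

end Horner

theorem hornerX_eq_hornerSum {m : ℕ} [NeZero m] (t : Pref m) (δ : Fin m → ℝ) (s : ℝ)
    (k : Fin m) : hornerX t δ s k = hornerSum (fun j : ℕ => δ (t j)) s k := by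
  rw [hornerX, hornerSum, Nat.range_succ_eq_Iic, ← Fin.map_valEmbedding_Iic, sum_map]
  refine sum_congr (by ext; simp) fun j _ => ?_
  simp

theorem Pref.sum_eq_sum_range {m : ℕ} (t : Pref (m + 1)) (g : Fin (m + 1) → ℝ) :
    ∑ j, g j = ∑ k ∈ range (m + 1), g (t k) := by
  rw [← Equiv.sum_comp t, ← Fin.sum_univ_eq_sum_range (fun k : ℕ => g (t k))]
  simp

theorem Consistent.strictAnti {m : ℕ} {t : Pref m} {u : Fin m → ℝ} (hu : Consistent t u) :
    StrictAnti (u ∘ t) :=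
  fun a b hab => (hu (t a) (t b)).mp (by simpa [Prefers] using hab)

theorem Consistent.umin_eq {m : ℕ} {t : Pref (m + 1)} {u : Fin (m + 1) → ℝ}
    (hu : Consistent t u) : umin u = u (t (Fin.last m)) := by
  refine IsLeast.csInf_eq ⟨⟨_, rfl⟩, ?_⟩
  rintro _ ⟨j, rfl⟩
  simpa using hu.strictAnti.antitone (Fin.le_last (t.symm j))

theorem URBI.le_mul_of_lt {m : ℕ} {r : ℝ} {u : Fin m → ℝ} (h : URBI r u) (hmin : umin u = 0)
    {a b : Fin m} (hab : u b < u a) : u b ≤ r * u a := by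
  simpa [hmin] using h a b hab

theorem horner_sufficient_general {n m : ℕ}
    (i : Fin n) (t : Fin n → Pref (m + 1))
    (δ : Fin (m + 1) → ℝ)
    (r : ℝ) (h0 : 0 < r)
    (hx : ∀ k : Fin (m + 1), k.val < m → 0 ≤ hornerX (t i) δ (1 / r) k)
    (u : Fin (m + 1) → ℝ) (hu : Consistent (t i) u) (hurbi : URBI r u)
    (hlast : u ((t i) (Fin.last m)) = 0) :
    0 ≤ ∑ j, δ j * u j := by
  have hhorner : ∀ k < m, 0 ≤ hornerSum (fun j : ℕ => δ (t i j)) (1 / r) k := fun k hk => by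
    have hk' : ((k : Fin (m + 1)) : ℕ) = k := Fin.val_cast_of_lt (by omega)
    simpa [hornerX_eq_hornerSum, hk'] using hx k (hk'.symm ▸ hk)
  have hstep : ∀ k < m, 1 / r * u (t i (k + 1 : ℕ)) ≤ u (t i k) := fun k hk => by
    have hlt : u (t i (k + 1 : ℕ)) < u (t i k) := hu.strictAnti (by
      rw [Fin.lt_def, Fin.val_cast_of_lt (by omega), Fin.val_cast_of_lt (by omega)]
      exact k.lt_succ_self)
    rw [one_div, inv_mul_le_iff₀ h0]
    exact hurbi.le_mul_of_lt (hu.umin_eq.trans hlast) hlt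
  calc 0 = hornerSum (fun j : ℕ => δ (t i j)) (1 / r) m * u (t i m) := by
        rw [Fin.natCast_eq_last, hlast, mul_zero]
    _ ≤ ∑ k ∈ range (m + 1), δ (t i k) * u (t i k) :=
      hornerSum_mul_le_sum_mul (v := fun k : ℕ => u (t i k)) hhorner hstep
    _ = ∑ j, δ j * u j := ((t i).sum_eq_sum_range fun j => δ j * u j).symm

/-- sufficiency direction of the verification criterion: if all Horner
polynomials are nonnegative at s = 1/r, then every consistent URBI(r) utility with
minimum (last-choice) value 0 weakly prefers the truthful allocation. -/
theorem horner_sufficient {n m : ℕ}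
    (f : (Fin n → Pref (m + 1)) → Fin n → Fin (m + 1) → ℝ)
    (i : Fin n) (t : Fin n → Pref (m + 1)) (t' : Pref (m + 1))
    (δ : Fin (m + 1) → ℝ)
    (hδ : ∀ j, δ j = f t i j - f (Function.update t i t') i j)
    (r : ℝ) (h0 : 0 < r) (h1 : r ≤ 1)
    (hx : ∀ k : Fin (m + 1), k.val < m → 0 ≤ hornerX (t i) δ (1 / r) k)
    (u : Fin (m + 1) → ℝ) (hu : Consistent (t i) u) (hurbi : URBI r u)
    (hlast : u ((t i) (Fin.last m)) = 0) :
    0 ≤ ∑ j, δ j * u j :=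
  horner_sufficient_general i t δ r h0 hx u hu hurbi hlast
end

section
/- Fix a vector δ ∈ ℝ^m with Σ_j δ_j = 0 and ranks indexed by a preference order a_1 ≻ … ≻ a_m, and the Horner polynomials x_k(s) as above. If x_{k̃}(1/r) < 0 for some k̃ ∈ {1,…,m−1}, then there exists a utility u consistent with the order and satisfying URBI(r) such that Σ_j δ_j·u(j) < 0. -/
open Finset

/-!
Choose `q > 1/r` (strictly, so that `q > 1` even when `r = 1`) so close to `1/r` that still
`x_k(q) < 0`. On ranks, the witness utility is `S·q^(k-i)` for `i ≤ k` (and `0` for `i > k`) plus `q^(m-i) - 1`. Both summands shrink at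
least by the factor `q` from one rank to any lower one, which gives `URBI(r)` because `r·q ≥ 1`;
the second summand makes the utility strictly decreasing, with minimum `0` at the last rank.
The gain `Σ δ_j u(j)` is `S·x_k(q)` plus a constant, hence negative for `S` large.
-/

def GeomAnti {ι : Type*} [Preorder ι] (q : ℝ) (f : ι → ℝ) : Prop :=
  ∀ ⦃i j⦄, i < j → q * f j ≤ f i

namespace GeomAnti

variable {ι : Type*} [Preorder ι] {q : ℝ} {f g : ι → ℝ}

theorem add (hf : GeomAnti q f) (hg : GeomAnti q g) : GeomAnti q (f + g) := fun i j hij => by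
  simp only [Pi.add_apply, mul_add]
  exact add_le_add (hf hij) (hg hij)

theorem const_mul (hf : GeomAnti q f) {c : ℝ} (hc : 0 ≤ c) : GeomAnti q (fun i => c * f i) :=
  fun i j hij => by
    rw [mul_left_comm]
    exact mul_le_mul_of_nonneg_left (hf hij) hc

theorem le_mul (hf : GeomAnti q f) (hf0 : ∀ i, 0 ≤ f i) {r : ℝ} (hr : 0 ≤ r) (hrq : 1 ≤ r * q)
    {i j : ι} (hij : i < j) : f j ≤ r * f i :=
  calc f j ≤ (r * q) * f j := le_mul_of_one_le_left (hf0 j) hrq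
    _ = r * (q * f j) := mul_assoc r q (f j)
    _ ≤ r * f i := mul_le_mul_of_nonneg_left (hf hij) hr

theorem antitone {ι : Type*} [PartialOrder ι] {f : ι → ℝ} (hf : GeomAnti q f) (hf0 : ∀ i, 0 ≤ f i)
    (hq : 1 ≤ q) : Antitone f := by
  intro i j hij
  rcases hij.lt_or_eq with hlt | rfl
  · simpa using hf.le_mul hf0 zero_le_one (by simpa using hq) hlt
  · exact le_rfl

end GeomAnti

section Profiles

variable {n : ℕ} {q : ℝ}

def geomHead (q : ℝ) (k i : Fin n) : ℝ := if i ≤ k then q ^ (k.val - i.val) else 0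

def geomTail (q : ℝ) (i : Fin n) : ℝ := q ^ i.rev.val - 1

theorem geomHead_nonneg (hq : 0 ≤ q) (k i : Fin n) : 0 ≤ geomHead q k i := by
  unfold geomHead
  split_ifs <;> positivity

theorem geomAnti_geomHead (hq : 1 ≤ q) (k : Fin n) : GeomAnti q (geomHead q k) := by
  intro i j hij
  by_cases hjk : j ≤ k
  · have hik : i ≤ k := hij.le.trans hjk
    rw [geomHead, geomHead, if_pos hjk, if_pos hik, ← pow_succ']
    exact pow_le_pow_right₀ hq (by omega)
  · rw [geomHead, if_neg hjk, mul_zero]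
    exact geomHead_nonneg (zero_le_one.trans hq) k i

theorem geomHead_last {m : ℕ} {k : Fin (m + 1)} (hk : k < Fin.last m) :
    geomHead q k (Fin.last m) = 0 :=
  if_neg (not_le.mpr hk)

theorem geomTail_nonneg (hq : 1 ≤ q) (i : Fin n) : 0 ≤ geomTail q i :=
  sub_nonneg.mpr (one_le_pow₀ hq)

theorem geomAnti_geomTail (hq : 1 ≤ q) : GeomAnti q (geomTail (n := n) q) := by
  intro i j hij
  have hpow : q * q ^ j.rev.val ≤ q ^ i.rev.val := by
    rw [← pow_succ']
    exact pow_le_pow_right₀ hq (Fin.rev_lt_rev.mpr hij)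
  simp only [geomTail]
  nlinarith

theorem strictAnti_geomTail (hq : 1 < q) : StrictAnti (geomTail (n := n) q) := fun _ _ hij =>
  sub_lt_sub_right (pow_lt_pow_right₀ hq (Fin.rev_lt_rev.mpr hij)) 1

theorem geomTail_last {m : ℕ} : geomTail q (Fin.last m) = 0 := by
  simp [geomTail]

theorem hornerX_eq_sum_geomHead (t : Pref n) (δ : Fin n → ℝ) (k : Fin n) :
    hornerX t δ q k = ∑ i, δ (t i) * geomHead q k i := by
  simp only [hornerX, geomHead, Finset.sum_filter, mul_ite, mul_zero]

theorem continuous_hornerX (t : Pref n) (δ : Fin n → ℝ) (k : Fin n) :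
    Continuous fun s => hornerX t δ s k := by
  unfold hornerX
  fun_prop

end Profiles

section Utilities

variable {n : ℕ} (t : Pref n) {v : Fin n → ℝ}

theorem consistent_comp_symm_s14 (hv : StrictAnti v) : Consistent t (v ∘ t.symm) :=
  fun _ _ => hv.lt_iff_gt.symm

theorem urbi_comp_symm_s14 {r : ℝ} (hv : StrictAnti v) (hv0 : ∀ i, 0 ≤ v i) {i₀ : Fin n}
    (hi₀ : v i₀ = 0) (hr : ∀ ⦃i j⦄, i < j → v j ≤ r * v i) : URBI r (v ∘ t.symm) := by
  have hmin : umin (v ∘ t.symm) = 0 :=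
    IsLeast.csInf_eq ⟨⟨t i₀, by simpa using hi₀⟩, by rintro _ ⟨a, rfl⟩; exact hv0 _⟩
  intro a b hab
  rw [hmin, sub_zero, sub_zero]
  exact hr (hv.lt_iff_gt.mp hab)

theorem sum_mul_comp_symm (δ : Fin n → ℝ) :
    ∑ j, δ j * (v ∘ t.symm) j = ∑ i, δ (t i) * v i :=
  (Equiv.sum_comp t fun j => δ j * v (t.symm j)).symm.trans (by simp)

end Utilities

theorem exists_nonneg_mul_add_neg {x : ℝ} (hx : x < 0) (c : ℝ) : ∃ S, 0 ≤ S ∧ S * x + c < 0 := by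
  refine ⟨(|c| + 1) / -x, div_nonneg (by positivity) (by linarith), ?_⟩
  rw [div_neg, neg_mul, div_mul_cancel₀ _ hx.ne]
  linarith [le_abs_self c]

theorem horner_necessary_general {m : ℕ} (δ : Fin (m + 1) → ℝ)
    (t : Pref (m + 1)) (r : ℝ) (h0 : 0 < r) (h1 : r ≤ 1)
    (k : Fin (m + 1)) (hk : k.val < m) (hneg : hornerX t δ (1 / r) k < 0) :
    ∃ u : Fin (m + 1) → ℝ, Consistent t u ∧ URBI r u ∧ ∑ j, δ j * u j < 0 := by
  obtain ⟨q, hrq, hq⟩ : ∃ q, 1 / r < q ∧ hornerX t δ q k < 0 :=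
    ((continuous_hornerX t δ k).continuousAt.eventually_lt continuousAt_const hneg).exists_gt
  have hq1 : 1 < q := lt_of_le_of_lt (by rwa [le_div_iff₀ h0, one_mul]) hrq
  have hq0 : 0 ≤ q := zero_le_one.trans hq1.le
  have hrq : 1 ≤ r * q := by rw [div_lt_iff₀ h0] at hrq; linarith
  obtain ⟨S, hS, hgain⟩ := exists_nonneg_mul_add_neg hq (∑ i, δ (t i) * geomTail q i)
  set v : Fin (m + 1) → ℝ := fun i => S * geomHead q k i + geomTail q i
  have hv0 : ∀ i, 0 ≤ v i := fun i =>
    add_nonneg (mul_nonneg hS (geomHead_nonneg hq0 k i)) (geomTail_nonneg hq1.le i)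
  have hv : StrictAnti v :=
    (((geomAnti_geomHead hq1.le k).antitone (geomHead_nonneg hq0 k) hq1.le).const_mul
      hS).add_strictAnti (strictAnti_geomTail hq1)
  have hvq : GeomAnti q v :=
    ((geomAnti_geomHead hq1.le k).const_mul hS).add (geomAnti_geomTail hq1.le)
  have hvlast : v (Fin.last m) = 0 := by
    simp [v, geomHead_last (Fin.lt_def.mpr hk), geomTail_last]
  refine ⟨v ∘ t.symm, consistent_comp_symm_s14 t hv,
    urbi_comp_symm_s14 t hv hv0 hvlast fun _ _ => hvq.le_mul hv0 h0.le hrq, ?_⟩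
  have hsum : ∑ i, δ (t i) * v i = S * hornerX t δ q k + ∑ i, δ (t i) * geomTail q i := by
    simp only [v, hornerX_eq_sum_geomHead, mul_add, sum_add_distrib, mul_left_comm _ S, mul_sum]
  rwa [sum_mul_comp_symm, hsum]

/-- necessity direction: if some Horner polynomial is negative at s = 1/r,
then some consistent URBI(r) utility strictly profits (Σ δ_j u(j) < 0). -/
theorem horner_necessary {m : ℕ} (δ : Fin (m + 1) → ℝ) (hsum : ∑ j, δ j = 0)
    (t : Pref (m + 1)) (r : ℝ) (h0 : 0 < r) (h1 : r ≤ 1)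
    (k : Fin (m + 1)) (hk : k.val < m) (hneg : hornerX t δ (1 / r) k < 0) :
    ∃ u : Fin (m + 1) → ℝ, Consistent t u ∧ URBI r u ∧ ∑ j, δ j * u j < 0 :=
  horner_necessary_general δ t r h0 h1 k hk hneg
end

section
/- There exists a weakly strategyproof single-agent decision rule that is nonetheless manipulable in mixed strategies: with allocations f(t) = (1/3,1/3,1/3), f(t') = (5/9, 0, 4/9), f(t'') = (2/9, 7/9, 0) over objects (a,b,c) for reports t: a≻b≻c, t': a≻c≻b, t'': b≻a≻c, no allocation strictly first order-stochastically dominates f(t) with respect to t, yet the mixture (1/2)f(t') + (1/2)f(t'') = (3.5/9, 3.5/9, 2/9) strictly first order-stochastically dominates f(t) with respect to t. -/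
open Finset

/-!
Under `t = a ≻ b ≻ c` the cumulative masses of `f(t)` are `1/3, 2/3, 1`. The report `t'` raises
the mass of `a` to `5/9` but lowers the mass of `{a, b}` to `5/9 < 2/3`; the report `t''` raises
the mass of `{a, b}` to `1` but lowers the mass of `a` to `2/9 < 1/3`. Averaging the two reports
trades one loss against the other's gain: the mixture has cumulative masses `7/18, 7/9, 1`.
-/

theorem cumul_refl {m : ℕ} (p : Fin m → ℝ) (a : Fin m) :
    cumul (Equiv.refl (Fin m)) p a = ∑ b ∈ Iic a, p b := by
  rw [cumul, ← filter_ge_eq_Iic]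
  rfl

theorem stochDom_refl_fin_three_iff (p q : Fin 3 → ℝ) :
    StochDom (Equiv.refl (Fin 3)) p q ↔
      (q 0 ≤ p 0 ∧ q 0 + q 1 ≤ p 0 + p 1 ∧ q 0 + q 1 + q 2 ≤ p 0 + p 1 + p 2) ∧
        (q 0 < p 0 ∨ q 0 + q 1 < p 0 + p 1 ∨ q 0 + q 1 + q 2 < p 0 + p 1 + p 2) := by
  have h0 : Iic (0 : Fin 3) = {0} := by decide
  have h1 : Iic (1 : Fin 3) = {0, 1} := by decide
  have h2 : Iic (2 : Fin 3) = {0, 1, 2} := by decide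
  simp [StochDom, cumul_refl, Fin.forall_fin_succ, Fin.exists_fin_succ, h0, h1, h2, add_assoc]

noncomputable def mixedManipulableRule : Pref 3 → Fin 3 → ℝ :=
  Function.update (Function.update (fun _ => ![1 / 3, 1 / 3, 1 / 3])
    (Equiv.swap 1 2) ![5 / 9, 0, 4 / 9]) (Equiv.swap 0 1) ![2 / 9, 7 / 9, 0]

theorem mixedManipulableRule_refl :
    mixedManipulableRule (Equiv.refl (Fin 3)) = ![1 / 3, 1 / 3, 1 / 3] := by
  rw [mixedManipulableRule, Function.update_of_ne (by decide), Function.update_of_ne (by decide)]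

theorem mixedManipulableRule_swap_one_two :
    mixedManipulableRule (Equiv.swap 1 2) = ![5 / 9, 0, 4 / 9] := by
  rw [mixedManipulableRule, Function.update_of_ne (by decide), Function.update_self]

theorem mixedManipulableRule_swap_zero_one :
    mixedManipulableRule (Equiv.swap 0 1) = ![2 / 9, 7 / 9, 0] := by
  rw [mixedManipulableRule, Function.update_self]

/-- a weakly strategyproof single-agent decision rule that is manipulable in
mixed strategies: with reports t: a≻b≻c, t': a≻c≻b, t'': b≻a≻c (a = 0, b = 1, c = 2),
neither f(t') nor f(t'') strictly stochastically dominates f(t) w.r.t. t, yet their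
(1/2,1/2)-mixture does. -/
theorem weak_sp_mixed_manipulable :
    ∃ f : Pref 3 → Fin 3 → ℝ,
      f (Equiv.refl (Fin 3)) = ![1 / 3, 1 / 3, 1 / 3] ∧
      f (Equiv.swap 1 2) = ![5 / 9, 0, 4 / 9] ∧
      f (Equiv.swap 0 1) = ![2 / 9, 7 / 9, 0] ∧
      ¬ StochDom (Equiv.refl (Fin 3)) (f (Equiv.swap 1 2)) (f (Equiv.refl (Fin 3))) ∧
      ¬ StochDom (Equiv.refl (Fin 3)) (f (Equiv.swap 0 1)) (f (Equiv.refl (Fin 3))) ∧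
      StochDom (Equiv.refl (Fin 3))
        (fun j => (f (Equiv.swap 1 2) j + f (Equiv.swap 0 1) j) / 2)
        (f (Equiv.refl (Fin 3))) := by
  refine ⟨mixedManipulableRule, mixedManipulableRule_refl, mixedManipulableRule_swap_one_two,
    mixedManipulableRule_swap_zero_one, ?_⟩
  simp only [mixedManipulableRule_refl, mixedManipulableRule_swap_one_two,
    mixedManipulableRule_swap_zero_one, stochDom_refl_fin_three_iff]
  norm_num [Matrix.cons_val_two]
end
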